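/- Let g be ℓ-Lipschitz and μ-smooth and g_φ differentiable with uniform gradient gap sup_x ‖∇g(x)−∇g_φ(x)‖ ≤ ε. For m-step gradient ascent with step λ = 1/m from a common start, the performance gap satisfies |g(x_φ^m) − g(x_*^m)| ≤ ℓ(1 + μ/m)^{m−1}ε ≤ ℓ e^μ ε, a bound independent of m. -/

import Mathlib

theorem stmt15 {d : ℕ} (g gφ : EuclideanSpace ℝ (Fin d) → ℝ)
    (ℓ μ ε : ℝ) (hμ : 0 < μ) (hℓ : 0 ≤ ℓ) (m : ℕ) (hm : 1 ≤ m)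
    (hgdiff : Differentiable ℝ g) (hφdiff : Differentiable ℝ gφ)
    (hlip : ∀ x y, |g x - g y| ≤ ℓ * ‖x - y‖)
    (hsmooth : ∀ x y, ‖gradient g x - gradient g y‖ ≤ μ * ‖x - y‖)
    (hgap : ∀ x, ‖gradient g x - gradient gφ x‖ ≤ ε)
    (x0 : EuclideanSpace ℝ (Fin d))
    (xstar xphi : ℕ → EuclideanSpace ℝ (Fin d))
    (hstar0 : xstar 0 = x0) (hphi0 : xphi 0 = x0)
    (hstar : ∀ k, xstar (k + 1) = xstar k + (1 / (m : ℝ)) • gradient g (xstar k))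
    (hphi : ∀ k, xphi (k + 1) = xphi k + (1 / (m : ℝ)) • gradient gφ (xphi k)) :
    |g (xphi m) - g (xstar m)| ≤ ℓ * (1 + μ / m) ^ (m - 1) * ε ∧
    ℓ * (1 + μ / m) ^ (m - 1) * ε ≤ ℓ * Real.exp μ * ε := by
  have hm' : (0:ℝ) < m := by exact_mod_cast hm
  have hε : 0 ≤ ε := le_trans (norm_nonneg _) (hgap x0)
  set q : ℝ := 1 + μ / m with hq
  clear_value q
  have hqm : 0 ≤ μ / m := div_nonneg hμ.le hm'.le
  have hq1 : 1 ≤ q := by rw [hq]; linarith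
  have hq0 : 0 ≤ q := le_trans zero_le_one hq1
  have hrec : ∀ k, ‖xphi (k+1) - xstar (k+1)‖ ≤ q * ‖xphi k - xstar k‖ + ε / m := by
    intro k
    rw [hphi, hstar]
    have h1 : xphi k + (1/(m:ℝ)) • gradient gφ (xphi k) -
        (xstar k + (1/(m:ℝ)) • gradient g (xstar k))
        = (xphi k - xstar k) + (1/(m:ℝ)) •
          ((gradient gφ (xphi k) - gradient g (xphi k)) +
           (gradient g (xphi k) - gradient g (xstar k))) := by
      simp [smul_add, smul_sub]; abel
    rw [h1]
    have hb : ‖gradient gφ (xphi k) - gradient g (xphi k)‖ ≤ ε := by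
      rw [norm_sub_rev]; exact hgap _
    have hc : ‖gradient g (xphi k) - gradient g (xstar k)‖ ≤ μ * ‖xphi k - xstar k‖ :=
      hsmooth _ _
    have hmpos : (0:ℝ) ≤ 1 / m := by positivity
    calc ‖(xphi k - xstar k) + (1/(m:ℝ)) •
          ((gradient gφ (xphi k) - gradient g (xphi k)) +
           (gradient g (xphi k) - gradient g (xstar k)))‖
        ≤ ‖xphi k - xstar k‖ + (1/(m:ℝ)) *
          (‖gradient gφ (xphi k) - gradient g (xphi k)‖ +
           ‖gradient g (xphi k) - gradient g (xstar k)‖) := by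
          refine le_trans (norm_add_le _ _) ?_
          rw [norm_smul, Real.norm_eq_abs, abs_of_nonneg hmpos]
          gcongr
          exact norm_add_le _ _
      _ ≤ ‖xphi k - xstar k‖ + (1/(m:ℝ)) * (ε + μ * ‖xphi k - xstar k‖) := by gcongr
      _ = q * ‖xphi k - xstar k‖ + ε / m := by rw [hq]; field_simp; ring
  have key : ∀ k, ‖xphi k - xstar k‖ ≤ ((k:ℝ) / m) * q ^ (k - 1) * ε := by
    intro k
    induction k with
    | zero => simp [hstar0, hphi0]
    | succ k ih =>
      have hqk : (1:ℝ) ≤ q ^ k := one_le_pow₀ hq1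
      have h1 : ε / m ≤ 1 / m * q ^ k * ε := by
        have h := mul_le_mul_of_nonneg_right hqk (by positivity : (0:ℝ) ≤ ε / m)
        calc ε / (m:ℝ) = 1 * (ε/m) := by ring
          _ ≤ q^k * (ε/m) := h
          _ = 1/m * q^k * ε := by ring
      rcases Nat.eq_zero_or_pos k with hk0 | hkpos
      · subst hk0
        have h0 : ‖xphi 0 - xstar 0‖ = 0 := by simp [hstar0, hphi0]
        have h2 := hrec 0
        rw [h0, mul_zero, zero_add] at h2
        refine h2.trans (le_of_eq ?_)
        norm_num
        ring
      · have hqq : q * q ^ (k - 1) = q ^ k := by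
          rw [← pow_succ']; congr 1; omega
        have h3 : q * ‖xphi k - xstar k‖ ≤ q * (((k:ℝ) / m) * q ^ (k - 1) * ε) :=
          mul_le_mul_of_nonneg_left ih hq0
        have h4 : q * (((k:ℝ) / m) * q ^ (k - 1) * ε) = ((k:ℝ)/m) * q^k * ε := by
          rw [← hqq]; ring
        have h5 := (hrec k).trans (by linarith :
          q * ‖xphi k - xstar k‖ + ε / m ≤ ((k:ℝ)/m) * q^k * ε + ε / m)
        refine h5.trans ?_
        rw [Nat.add_sub_cancel]
        push_cast
        have h6 : ((k:ℝ)+1)/m * q^k * ε = (k:ℝ)/m * q^k * ε + 1/m * q^k * ε := by ring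
        linarith
  have hd : ‖xphi m - xstar m‖ ≤ q ^ (m - 1) * ε := by
    have := key m
    rwa [div_self hm'.ne', one_mul] at this
  constructor
  · calc |g (xphi m) - g (xstar m)| ≤ ℓ * ‖xphi m - xstar m‖ := hlip _ _
      _ ≤ ℓ * (q ^ (m - 1) * ε) := by gcongr
      _ = ℓ * q ^ (m - 1) * ε := by ring
  · have hexp : q ≤ Real.exp (μ / m) := by
      have := Real.add_one_le_exp (μ / m)
      rw [hq]; linarith
    have h1 : q ^ (m - 1) ≤ Real.exp (μ / m) ^ (m - 1) := by gcongr
    have h2 : Real.exp (μ / m) ^ (m - 1) ≤ Real.exp μ := by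
      rw [← Real.exp_nat_mul]
      apply Real.exp_le_exp.mpr
      have hc1 : ((m - 1 : ℕ):ℝ) = (m:ℝ) - 1 := by
        push_cast [Nat.cast_sub hm]; ring
      rw [hc1]
      have hc2 : ((m:ℝ) - 1) * (μ / m) = μ - μ / m := by field_simp
      rw [hc2]; linarith
    gcongr
    exact h1.trans h2
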